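/- Let m > 0, let ω₁ : (m,∞) → (0, ω₁(m)) be convex, decreasing with ω₁(t) → 0 as t → ∞, and define φ(t) = m·ω₁(t)/t for t > m. Then the function Φ defined on [0, ω₁(m)) by Φ(0) = 0 and Φ(t) = 1/φ⁻¹(t) for t ≠ 0 is concave and increasing on (0, ω₁(m)) with Φ(0⁺) = 0. -/

import Mathlib

/-!
Substituting `u = 1 / s` turns `φ(s) = m ω(s) / s` into `ψ(u) = m u ω(1/u)`, the perspective
function of `ω`, which is convex and strictly increasing on `(0, 1/m)` and maps it into `(0, L)`.
By the intermediate value theorem `φ` takes every value in `(0, L)`, so `Φ = 1 / φ⁻¹` is a right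
inverse of `ψ` there. A right inverse of a convex increasing function is concave and increasing,
and it tends to the left end `0` of `(0, 1/m)` as its argument tends to `0⁺`.
-/

open Set Function Filter Topology Pointwise

theorem ConvexOn.mul_comp_inv {𝕜 : Type*} [Field 𝕜] [LinearOrder 𝕜] [IsStrictOrderedRing 𝕜]
    {s : Set 𝕜} {f : 𝕜 → 𝕜} (hf : ConvexOn 𝕜 s f) (hs : s ⊆ Ioi 0) :
    ConvexOn 𝕜 s⁻¹ (fun u => u * f u⁻¹) := by
  have key : ∀ ⦃u₁⦄, u₁ ∈ s⁻¹ → ∀ ⦃u₂⦄, u₂ ∈ s⁻¹ → ∀ ⦃a b : 𝕜⦄, 0 ≤ a → 0 ≤ b → a + b = 1 →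
      (a * u₁ + b * u₂)⁻¹ ∈ s ∧
      (a * u₁ + b * u₂) * f (a * u₁ + b * u₂)⁻¹ ≤ a * (u₁ * f u₁⁻¹) + b * (u₂ * f u₂⁻¹) := by
    intro u₁ hu₁ u₂ hu₂ a b ha hb hab
    have hu₁0 : 0 < u₁ := inv_pos.mp (hs hu₁)
    have hu₂0 : 0 < u₂ := inv_pos.mp (hs hu₂)
    set u := a * u₁ + b * u₂
    have hu : 0 < u := by
      rcases ha.eq_or_lt with rfl | ha'
      · simp only [zero_add] at hab; simp [u, hab, hu₂0]
      · positivity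
    -- `u⁻¹` is the convex combination of `u₁⁻¹, u₂⁻¹` with weights `a u₁ / u, b u₂ / u`
    have hw : a * u₁ / u + b * u₂ / u = 1 := by rw [← add_div, div_self hu.ne']
    have hcomb : (a * u₁ / u) • u₁⁻¹ + (b * u₂ / u) • u₂⁻¹ = u⁻¹ := by
      simp only [smul_eq_mul]; field_simp; exact hab
    have hla : 0 ≤ a * u₁ / u := by positivity
    have hlb : 0 ≤ b * u₂ / u := by positivity
    refine ⟨hcomb ▸ hf.1 hu₁ hu₂ hla hlb hw, ?_⟩
    have h := mul_le_mul_of_nonneg_left (hcomb ▸ hf.2 hu₁ hu₂ hla hlb hw) hu.le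
    simp only [smul_eq_mul] at h
    convert h using 1
    field_simp
  exact ⟨fun u₁ hu₁ u₂ hu₂ a b ha hb hab => by
      simpa [smul_eq_mul] using (key hu₁ hu₂ ha hb hab).1,
    fun u₁ hu₁ u₂ hu₂ a b ha hb hab => by simpa [smul_eq_mul] using (key hu₁ hu₂ ha hb hab).2⟩

theorem ConvexOn.concaveOn_of_rightInvOn {𝕜 : Type*} [Field 𝕜] [LinearOrder 𝕜]
    [IsStrictOrderedRing 𝕜] {s t : Set 𝕜} {ψ Φ : 𝕜 → 𝕜} (hψ : ConvexOn 𝕜 s ψ)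
    (hψmono : StrictMonoOn ψ s) (ht : Convex 𝕜 t) (hmaps : MapsTo Φ t s)
    (hinv : RightInvOn Φ ψ t) : ConcaveOn 𝕜 t Φ := by
  refine ⟨ht, fun x₁ hx₁ x₂ hx₂ a b ha hb hab => ?_⟩
  have hx := ht hx₁ hx₂ ha hb hab
  refine (hψmono.le_iff_le (hψ.1 (hmaps hx₁) (hmaps hx₂) ha hb hab) (hmaps hx)).1 ?_
  calc ψ (a • Φ x₁ + b • Φ x₂) ≤ a • ψ (Φ x₁) + b • ψ (Φ x₂) :=
        hψ.2 (hmaps hx₁) (hmaps hx₂) ha hb hab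
    _ = ψ (Φ (a • x₁ + b • x₂)) := by rw [hinv hx₁, hinv hx₂, hinv hx]

theorem tendsto_nhdsGT_of_rightInvOn {α β : Type*} [LinearOrder α] [TopologicalSpace α]
    [OrderTopology α] [DenselyOrdered α] [LinearOrder β] [TopologicalSpace β] [OrderTopology β]
    {ψ : α → β} {Φ : β → α} {a b : α} {c d : β} (hab : a < b) (hψ : MonotoneOn ψ (Ioo a b))
    (hψmaps : MapsTo ψ (Ioo a b) (Ioo c d)) (hΦmaps : MapsTo Φ (Ioo c d) (Ioo a b))
    (hinv : RightInvOn Φ ψ (Ioo c d)) : Tendsto Φ (𝓝[>] c) (𝓝 a) := by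
  obtain ⟨u₀, hu₀⟩ := exists_between hab
  have hcd : c < d := (hψmaps hu₀).1.trans (hψmaps hu₀).2
  refine tendsto_order.2 ⟨fun a' ha' => ?_, fun ε hε => ?_⟩
  · filter_upwards [Ioo_mem_nhdsGT hcd] with x hx using ha'.trans (hΦmaps hx).1
  · obtain ⟨u, hu⟩ := exists_between (lt_min hε hab)
    have hu' : u ∈ Ioo a b := ⟨hu.1, hu.2.trans_le (min_le_right _ _)⟩
    filter_upwards [Ioo_mem_nhdsGT (hψmaps hu').1] with x hx
    have hx' : x ∈ Ioo c d := ⟨hx.1, hx.2.trans (hψmaps hu').2⟩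
    refine lt_of_lt_of_le ?_ (hu.2.le.trans (min_le_left _ _))
    by_contra! h
    exact (hinv hx' ▸ hψ hu' (hΦmaps hx') h).not_gt hx.2

noncomputable def phi (m : ℝ) (ω : ℝ → ℝ) (s : ℝ) : ℝ := m * ω s / s

noncomputable def psi (m : ℝ) (ω : ℝ → ℝ) (u : ℝ) : ℝ := m * (u * ω u⁻¹)

section

variable {m L : ℝ} {ω : ℝ → ℝ}

theorem psi_inv (s : ℝ) : psi m ω s⁻¹ = phi m ω s := by
  simp only [psi, phi, inv_inv]; ring

theorem convexOn_psi (hm : 0 < m) (hconv : ConvexOn ℝ (Ioi m) ω) :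
    ConvexOn ℝ (Ioo 0 m⁻¹) (psi m ω) := by
  rw [← inv_Ioi₀ hm]
  exact (hconv.mul_comp_inv fun s hs => hm.trans hs).smul hm.le

theorem strictMonoOn_psi (hm : 0 < m) (hpos : ∀ s ∈ Ioi m, 0 < ω s)
    (hanti : StrictAntiOn ω (Ioi m)) : StrictMonoOn (psi m ω) (Ioo 0 m⁻¹) := by
  rw [← inv_Ioi₀ hm]
  intro u₁ hu₁ u₂ hu₂ hu
  have hu₁0 : 0 < u₁ := inv_pos.mp (hm.trans hu₁)
  have hω : ω u₁⁻¹ < ω u₂⁻¹ := hanti hu₂ hu₁ (inv_strictAnti₀ hu₁0 hu)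
  exact mul_lt_mul_of_pos_left (mul_lt_mul'' hu hω hu₁0.le (hpos _ hu₁).le) hm

theorem mapsTo_psi (hm : 0 < m) (hpos : ∀ s ∈ Ioi m, 0 < ω s ∧ ω s < L) :
    MapsTo (psi m ω) (Ioo 0 m⁻¹) (Ioo 0 L) := by
  intro u ⟨hu0, hum⟩
  have hu : u⁻¹ ∈ Ioi m := (lt_inv_comm₀ hu0 hm).1 hum
  obtain ⟨hω0, hωL⟩ := hpos _ hu
  have hmu : m * u < 1 := by rwa [← lt_div_iff₀' hm, one_div]
  refine ⟨by unfold psi; positivity, ?_⟩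
  calc psi m ω u = (m * u) * ω u⁻¹ := mul_assoc _ _ _ |>.symm
    _ < 1 * L := mul_lt_mul hmu hωL.le hω0 zero_le_one
    _ = L := one_mul L

theorem surjOn_phi (hm : 0 < m) (hconv : ConvexOn ℝ (Ioi m) ω)
    (hlim₀ : Tendsto ω atTop (𝓝 0)) (hlimm : Tendsto ω (𝓝[>] m) (𝓝 L)) :
    SurjOn (phi m ω) (Ioi m) (Ioo 0 L) := by
  have hcont : ContinuousOn (phi m ω) (Ioi m) :=
    (continuousOn_const.mul (hconv.continuousOn isOpen_Ioi)).div continuousOn_id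
      fun s hs => (hm.trans hs).ne'
  have htop : Tendsto (phi m ω) atTop (𝓝 0) := by
    have h := (tendsto_const_nhds (x := m)).div_atTop tendsto_id |>.mul hlim₀
    rw [zero_mul] at h
    exact h.congr fun s => by simp only [phi, id]; ring
  have hright : Tendsto (phi m ω) (𝓝[>] m) (𝓝 L) := by
    have h : Tendsto (phi m ω) (𝓝[>] m) (𝓝 (m * L / m)) :=
      (tendsto_const_nhds.mul hlimm).div (tendsto_nhdsWithin_of_tendsto_nhds tendsto_id) hm.ne'
    rwa [mul_div_cancel_left₀ L hm.ne'] at h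
  exact isPreconnected_Ioi.intermediate_value_Ioo (le_principal_iff.2 (Ioi_mem_atTop m))
    (le_principal_iff.2 self_mem_nhdsWithin) hcont htop hright

end

/-- Theorem 2.2(1): with `m > 0`, `ω₁` convex decreasing on `(m,∞)` with `ω₁(∞) = 0`
and `ω₁(m) = L` (limit at `m⁺`), and `φ(t) = m ω₁(t)/t`, the function
`Φ(t) = 1/φ⁻¹(t)` (with `Φ(0) = 0`) is concave and increasing on `(0, L)` and
tends to `0` at `0⁺`. -/
theorem stmt6 (m : ℝ) (hm : 0 < m) (ω₁ : ℝ → ℝ) (L : ℝ)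
    (hpos : ∀ t ∈ Ioi m, 0 < ω₁ t ∧ ω₁ t < L)
    (hconv : ConvexOn ℝ (Ioi m) ω₁)
    (hanti : StrictAntiOn ω₁ (Ioi m))
    (hlim₀ : Tendsto ω₁ atTop (nhds 0))
    (hlimm : Tendsto ω₁ (nhdsWithin m (Ioi m)) (nhds L)) :
    ConcaveOn ℝ (Ioo 0 L)
      (fun t => if t = 0 then 0 else
        1 / Function.invFunOn (fun s => m * ω₁ s / s) (Ioi m) t) ∧
    StrictMonoOn
      (fun t => if t = 0 then 0 else
        1 / Function.invFunOn (fun s => m * ω₁ s / s) (Ioi m) t) (Ioo 0 L) ∧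
    Tendsto
      (fun t => if t = 0 then 0 else
        1 / Function.invFunOn (fun s => m * ω₁ s / s) (Ioi m) t)
      (nhdsWithin 0 (Ioi 0)) (nhds 0) := by
  set Φ := fun t => if t = 0 then 0 else 1 / invFunOn (phi m ω₁) (Ioi m) t
  have hsurj := surjOn_phi hm hconv hlim₀ hlimm
  have hmaps : MapsTo Φ (Ioo 0 L) (Ioo 0 m⁻¹) := fun t ht => by
    rw [← inv_Ioi₀ hm]
    simpa [Φ, ht.1.ne'] using invFunOn_mem (hsurj ht)
  have hinv : RightInvOn Φ (psi m ω₁) (Ioo 0 L) := fun t ht => by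
    simpa [Φ, ht.1.ne', psi_inv] using invFunOn_eq (hsurj ht)
  have hψmono := strictMonoOn_psi hm (fun s hs => (hpos s hs).1) hanti
  exact ⟨(convexOn_psi hm hconv).concaveOn_of_rightInvOn hψmono (convex_Ioo 0 L) hmaps hinv,
    (monotoneOn_of_rightInvOn_of_mapsTo hψmono.monotoneOn hinv hmaps).strictMonoOn_of_injOn
      hinv.injOn,
    tendsto_nhdsGT_of_rightInvOn (inv_pos.2 hm) hψmono.monotoneOn (mapsTo_psi hm hpos) hmaps hinv⟩
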